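/- Let ξ and η be positive irrational real numbers and m a positive natural number with ξ·η = m. Suppose both (n−1, k−1) and (n, k) are connected, where n ≥ 2 and k ≥ 2, and set r = p_{n−1}/Q_{k−1}, s = P_{k−1}/q_{n−1}, r₁ = p_{n−2}/Q_{k−2}, s₁ = P_{k−2}/q_{n−2} (all of which are natural numbers). Then the roles of r and s are interchanged: r₁ = s and s₁ = r. -/

import Mathlib

/-- Complete quotients: `cq ξ 0 = ξ`, `cq ξ (n+1) = 1/(cq ξ n - ⌊cq ξ n⌋)`. -/
noncomputable def cq (ξ : ℝ) : ℕ → ℝ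
  | 0 => ξ
  | n + 1 => 1 / (cq ξ n - ⌊cq ξ n⌋)

/-- Partial quotients: `pquot ξ n = b_n = ⌊ξ_n⌋`. -/
noncomputable def pquot (ξ : ℝ) (n : ℕ) : ℤ := ⌊cq ξ n⌋

/-- Convergent numerators, shifted by one: `cnum ξ 0 = p_{-1} = 1`,
`cnum ξ 1 = p_0 = b_0`, and `cnum ξ (n+1) = p_n = b_n p_{n-1} + p_{n-2}`. -/
noncomputable def cnum (ξ : ℝ) : ℕ → ℤ
  | 0 => 1
  | 1 => pquot ξ 0
  | n + 2 => pquot ξ (n + 1) * cnum ξ (n + 1) + cnum ξ n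

/-- Convergent denominators, shifted by one: `cden ξ 0 = q_{-1} = 0`,
`cden ξ 1 = q_0 = 1`, and `cden ξ (n+1) = q_n = b_n q_{n-1} + q_{n-2}`. -/
noncomputable def cden (ξ : ℝ) : ℕ → ℤ
  | 0 => 0
  | 1 => 1
  | n + 2 => pquot ξ (n + 1) * cden ξ (n + 1) + cden ξ n

/-! A connection `pP = m qQ` of coprime pairs factors as `p = rQ`, `P = sq` with `rs = m`. For two
consecutive connections, substituting these factorisations into the determinant identities
`p q' - p' q = ±1` and `P Q' - P' Q = ±1` and eliminating with `rs = r₁s₁ = m` leaves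
`s·(±1) + r₁·(±1) = 0`; as `s` and `r₁` are positive, this forces `r₁ = s`, and then `s₁ = r`. -/

lemma cq_succ (ξ : ℝ) (n : ℕ) : cq ξ (n + 1) = (Int.fract (cq ξ n))⁻¹ := by
  rw [cq, Int.self_sub_floor, one_div]

lemma irrational_cq {ξ : ℝ} (h : Irrational ξ) : ∀ n, Irrational (cq ξ n)
  | 0 => h
  | n + 1 => by
    rw [cq_succ]
    exact ((irrational_cq h n).sub_intCast _).inv

lemma one_le_pquot_succ {ξ : ℝ} (h : Irrational ξ) (n : ℕ) : 1 ≤ pquot ξ (n + 1) := by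
  have hfract : 0 < Int.fract (cq ξ n) := Int.fract_pos.mpr ((irrational_cq h n).ne_int _)
  refine Int.le_floor.mpr ?_
  rw [cq_succ, Int.cast_one, ← one_div]
  exact one_le_one_div hfract (Int.fract_lt_one _).le

lemma cden_nonneg {ξ : ℝ} (h : Irrational ξ) : ∀ n, 0 ≤ cden ξ n
  | 0 => le_rfl
  | 1 => zero_le_one
  | n + 2 => by
    have := one_le_pquot_succ h n
    have := cden_nonneg h (n + 1)
    have := cden_nonneg h n
    rw [cden]
    positivity

lemma cden_succ_pos {ξ : ℝ} (h : Irrational ξ) : ∀ n, 0 < cden ξ (n + 1)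
  | 0 => one_pos
  | n + 1 => by
    have := one_le_pquot_succ h n
    have := cden_succ_pos h n
    have := cden_nonneg h n
    rw [cden]
    positivity

lemma cnum_nonneg {ξ : ℝ} (hpos : 0 < ξ) (h : Irrational ξ) : ∀ n, 0 ≤ cnum ξ n
  | 0 => zero_le_one
  | 1 => Int.floor_nonneg.mpr hpos.le
  | n + 2 => by
    have := one_le_pquot_succ h n
    have := cnum_nonneg hpos h (n + 1)
    have := cnum_nonneg hpos h n
    rw [cnum]
    positivity

lemma cnum_succ_mul_cden_sub_cnum_mul_cden_succ (ξ : ℝ) :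
    ∀ n, cnum ξ (n + 1) * cden ξ n - cnum ξ n * cden ξ (n + 1) = (-1) ^ (n + 1)
  | 0 => by simp [cnum, cden]
  | n + 1 => by
    rw [cnum, cden]
    linear_combination -cnum_succ_mul_cden_sub_cnum_mul_cden_succ ξ n

lemma isCoprime_cnum_cden_succ (ξ : ℝ) (n : ℕ) : IsCoprime (cnum ξ (n + 1)) (cden ξ (n + 1)) := by
  have hdet := cnum_succ_mul_cden_sub_cnum_mul_cden_succ ξ n
  rcases neg_one_pow_eq_or ℤ (n + 1) with hsign | hsign <;> rw [hsign] at hdet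
  · exact ⟨cden ξ n, -cnum ξ n, by linear_combination hdet⟩
  · exact ⟨-cden ξ n, cnum ξ n, by linear_combination -hdet⟩

lemma exists_pos_factors_of_mul_eq {p q P Q m : ℤ} (hpq : IsCoprime p q) (hPQ : IsCoprime P Q)
    (hp : 0 ≤ p) (hq : 0 < q) (hQ : 0 < Q) (hm : 0 < m) (h : p * P = m * q * Q) :
    ∃ r s, p = r * Q ∧ P = s * q ∧ r * s = m ∧ 0 < r ∧ 0 < s := by
  obtain ⟨r, rfl⟩ : Q ∣ p := hPQ.symm.dvd_of_dvd_mul_right ⟨m * q, by linear_combination h⟩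
  obtain ⟨s, rfl⟩ : q ∣ P := hpq.symm.dvd_of_dvd_mul_right ⟨m * Q, by linear_combination h⟩
  have hrs : r * s = m := by
    apply mul_left_cancel₀ (mul_pos hq hQ).ne'
    linear_combination h
  have hr : 0 ≤ r := nonneg_of_mul_nonneg_right hp hQ
  have hs : 0 < s := pos_of_mul_pos_right (hrs ▸ hm) hr
  exact ⟨r, s, mul_comm _ _, mul_comm _ _, hrs, pos_of_mul_pos_left (hrs ▸ hm) hs.le, hs⟩

lemma eq_of_mul_neg_one_pow_add_mul_neg_one_pow_eq_zero {a b : ℤ} (ha : 0 < a) (hb : 0 < b)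
    (i j : ℕ) (h : a * (-1) ^ i + b * (-1) ^ j = 0) : a = b := by
  rcases neg_one_pow_eq_or ℤ i with hi | hi <;> rcases neg_one_pow_eq_or ℤ j with hj | hj <;>
    rw [hi, hj] at h <;> linarith

lemma interchange_of_det {q q' Q Q' r s r₁ s₁ : ℤ} {i j : ℕ} (hs : 0 < s) (hr₁ : 0 < r₁)
    (hrs : r * s = r₁ * s₁) (hdet : r * Q * q' - r₁ * Q' * q = (-1) ^ i)
    (hdet' : s * q * Q' - s₁ * q' * Q = (-1) ^ j) : r₁ = s ∧ s₁ = r := by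
  have hr₁s : r₁ = s := by
    refine (eq_of_mul_neg_one_pow_add_mul_neg_one_pow_eq_zero hs hr₁ i j ?_).symm
    linear_combination -s * hdet - r₁ * hdet' + Q * q' * hrs
  refine ⟨hr₁s, mul_left_cancel₀ hs.ne' ?_⟩
  linear_combination -hrs - s₁ * hr₁s

theorem consecutive_connections_interchange_general
    (ξ η : ℝ) (m : ℕ) (hξpos : 0 < ξ)
    (hξirr : Irrational ξ) (hηirr : Irrational η) (hm : 0 < m)
    (n k : ℕ) (hn : 2 ≤ n) (hk : 2 ≤ k)
    (hconn : cnum ξ n * cnum η k = (m : ℤ) * cden ξ n * cden η k)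
    (hconn' : cnum ξ (n - 1) * cnum η (k - 1) =
      (m : ℤ) * cden ξ (n - 1) * cden η (k - 1)) :
    cnum ξ (n - 1) / cden η (k - 1) = cnum η k / cden ξ n ∧
    cnum η (k - 1) / cden ξ (n - 1) = cnum ξ n / cden η k := by
  obtain ⟨a, rfl⟩ : ∃ a, n = a + 1 + 1 := ⟨n - 2, by omega⟩
  obtain ⟨b, rfl⟩ : ∃ b, k = b + 1 + 1 := ⟨k - 2, by omega⟩
  rw [Nat.add_sub_cancel, Nat.add_sub_cancel] at hconn' ⊢
  have hmz : (0 : ℤ) < m := by exact_mod_cast hm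
  obtain ⟨r, s, hp, hP, hrs, -, hs⟩ := exists_pos_factors_of_mul_eq
    (isCoprime_cnum_cden_succ ξ (a + 1)) (isCoprime_cnum_cden_succ η (b + 1))
    (cnum_nonneg hξpos hξirr _) (cden_succ_pos hξirr _) (cden_succ_pos hηirr _) hmz hconn
  obtain ⟨r₁, s₁, hp', hP', hrs', hr₁, -⟩ := exists_pos_factors_of_mul_eq
    (isCoprime_cnum_cden_succ ξ a) (isCoprime_cnum_cden_succ η b)
    (cnum_nonneg hξpos hξirr _) (cden_succ_pos hξirr _) (cden_succ_pos hηirr _) hmz hconn'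
  have hdet := cnum_succ_mul_cden_sub_cnum_mul_cden_succ ξ (a + 1)
  have hdet' := cnum_succ_mul_cden_sub_cnum_mul_cden_succ η (b + 1)
  rw [hp, hp'] at hdet
  rw [hP, hP'] at hdet'
  obtain ⟨hr₁s, hs₁r⟩ := interchange_of_det hs hr₁ (hrs.trans hrs'.symm) hdet hdet'
  simp only [hp, hP, hp', hP', Int.mul_ediv_cancel _ (cden_succ_pos hξirr _).ne',
    Int.mul_ediv_cancel _ (cden_succ_pos hηirr _).ne']
  exact ⟨hr₁s, hs₁r⟩

/-- Lemma 2.8: for two consecutive connections the roles of `r` and `s`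
are interchanged: `r₁ = s` and `s₁ = r`. -/
theorem consecutive_connections_interchange
    (ξ η : ℝ) (m : ℕ) (hξpos : 0 < ξ) (hηpos : 0 < η)
    (hξirr : Irrational ξ) (hηirr : Irrational η) (hm : 0 < m)
    (hmul : ξ * η = m) (n k : ℕ) (hn : 2 ≤ n) (hk : 2 ≤ k)
    (hconn : cnum ξ n * cnum η k = (m : ℤ) * cden ξ n * cden η k)
    (hconn' : cnum ξ (n - 1) * cnum η (k - 1) =
      (m : ℤ) * cden ξ (n - 1) * cden η (k - 1)) :
    cnum ξ (n - 1) / cden η (k - 1) = cnum η k / cden ξ n ∧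
    cnum η (k - 1) / cden ξ (n - 1) = cnum ξ n / cden η k :=
  consecutive_connections_interchange_general ξ η m hξpos hξirr hηirr hm n k hn hk hconn hconn'
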